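/- arXiv:2403.12234 — 5 statements merged into one kernel-verified Lean document; each statement's English description precedes it below -/
import Mathlib

section
/- Let t ≥ 3 and let s = (a1, ..., at) be a sequence of elements of {1, ..., n}. Then s is cyclic if and only if for every σ in D_{2t} \ C_t (i.e., every element of the dihedral group of order 2t not a rotation), the sequence (a_{1σ}, ..., a_{tσ}) is anti-cyclic. -/
/-!
Write `ρ` for the rotation `i ↦ i + 1`. Every element of `D_{2t}` that is not a rotation is a
reflection `σ = ρ ^ k * rev`, and reflections reverse the cyclic order: `σ ∘ ρ = ρ⁻¹ ∘ σ`.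
For such `σ`, the bijection `i ↦ σ i` carries the ascents `a (σ i) < a (σ (i + 1))` of `a ∘ σ`
onto the descents of `a`, so `a ∘ σ` is anti-cyclic exactly when `a` is cyclic. Conversely it
suffices to use the reflection `rev`, which is not a rotation as soon as `ρ² ≠ 1`, i.e. `t ≥ 3`.
-/

/-- A sequence `a : Fin t → Fin n` is cyclic if at most one index `i`
satisfies `a i > a (i+1)` (indices mod `t`). -/
def IsCyclicSeq {n t : ℕ} (a : Fin t → Fin n) : Prop :=
  (Finset.univ.filter fun i : Fin t =>
    a ⟨(i.val + 1) % t, Nat.mod_lt _ i.pos⟩ < a i).card ≤ 1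

/-- A sequence is anti-cyclic if at most one index `i`
satisfies `a i < a (i+1)` (indices mod `t`). -/
def IsAntiCyclicSeq {n t : ℕ} (a : Fin t → Fin n) : Prop :=
  (Finset.univ.filter fun i : Fin t =>
    a i < a ⟨(i.val + 1) % t, Nat.mod_lt _ i.pos⟩).card ≤ 1

/-- A sequence is oriented if it is cyclic or anti-cyclic. -/
def IsOrientedSeq {n t : ℕ} (a : Fin t → Fin n) : Prop :=
  IsCyclicSeq a ∨ IsAntiCyclicSeq a

open Finset Equiv Subgroup

lemma card_filter_rel_of_mul_eq_inv_mul {α : Type*} [Fintype α] {σ ρ : Perm α}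
    (h : σ * ρ = ρ⁻¹ * σ) (r : α → α → Prop) [DecidableRel r] :
    #{i | r (σ i) (σ (ρ i))} = #{i | r (ρ i) i} := by
  have h' (i : α) : σ (ρ i) = ρ⁻¹ (σ i) := Perm.congr_fun h i
  calc #{i | r (σ i) (σ (ρ i))} = #{i | r (σ i) (ρ⁻¹ (σ i))} := by simp only [h']
    _ = #{j | r j (ρ⁻¹ j)} := card_equiv σ (by simp)
    _ = #{j | r (ρ j) j} := (card_equiv ρ (by simp)).symm

section Dihedral

variable {G : Type*} [Group G] {x r : G}

lemma conj_mem_zpowers_of_mul_eq_inv_mul (hr : r * r = 1) (hrx : r * x = x⁻¹ * r) {g : G}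
    (hg : g ∈ zpowers x) : r * g * r ∈ zpowers x := by
  obtain ⟨k, rfl⟩ := mem_zpowers_iff.mp hg
  have hr' : r⁻¹ = r := inv_eq_of_mul_eq_one_right hr
  have hconj : r * x * r⁻¹ = x⁻¹ := by rw [hrx, mul_inv_cancel_right]
  have : r * x ^ k * r = (r * x * r⁻¹) ^ k := by rw [conj_zpow, hr']
  rw [this, hconj, inv_zpow']
  exact zpow_mem_zpowers x (-k)

lemma mem_zpowers_or_mul_mem_zpowers_of_mem_closure (hr : r * r = 1) (hrx : r * x = x⁻¹ * r)
    {g : G} (hg : g ∈ closure {x, r}) : g ∈ zpowers x ∨ g * r ∈ zpowers x := by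
  have hr' : r⁻¹ = r := inv_eq_of_mul_eq_one_right hr
  have conj_mem : ∀ {h : G}, h ∈ zpowers x → r * h * r ∈ zpowers x :=
    conj_mem_zpowers_of_mul_eq_inv_mul hr hrx
  induction hg using closure_induction with
  | mem g hg =>
    rcases hg with rfl | rfl
    · exact .inl (mem_zpowers g)
    · exact .inr (hr ▸ one_mem _)
  | one => exact .inl (one_mem _)
  | mul g h _ _ ihg ihh =>
    rcases ihg with hg | hg <;> rcases ihh with hh | hh
    · exact .inl (mul_mem hg hh)
    · exact .inr (mul_assoc g h r ▸ mul_mem hg hh)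
    · refine .inr ?_
      have : g * h * r = g * r * (r⁻¹ * h * r) := by group
      rw [this, hr']
      exact mul_mem hg (conj_mem hh)
    · refine .inl ?_
      have : g * h = g * r * (r⁻¹ * (h * r) * r⁻¹) := by group
      rw [this, hr']
      exact mul_mem hg (conj_mem hh)
  | inv g _ ihg =>
    rcases ihg with hg | hg
    · exact .inl (inv_mem hg)
    · refine .inr ?_
      have : g⁻¹ * r = r * (g * r)⁻¹ * r := by group
      exact this ▸ conj_mem (inv_mem hg)

lemma mul_eq_inv_mul_of_mem_closure_of_notMem_zpowers (hr : r * r = 1)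
    (hrx : r * x = x⁻¹ * r) {g : G} (hg : g ∈ closure {x, r}) (hgx : g ∉ zpowers x) :
    g * x = x⁻¹ * g := by
  obtain ⟨k, hk⟩ :=
    mem_zpowers_iff.mp ((mem_zpowers_or_mul_mem_zpowers_of_mem_closure hr hrx hg).resolve_left hgx)
  have hg' : g = x ^ k * r := by rw [hk, mul_assoc, hr, mul_one]
  rw [hg', mul_assoc, hrx]
  group

lemma notMem_zpowers_of_mul_eq_inv_mul (hrx : r * x = x⁻¹ * r) (hx : 2 < orderOf x) :
    r ∉ zpowers x := by
  intro hmem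
  obtain ⟨k, rfl⟩ := mem_zpowers_iff.mp hmem
  have hinv : x⁻¹ = x := mul_right_cancel (hrx.symm.trans (Commute.self_zpow x k).eq.symm)
  have hsq : x ^ 2 = 1 :=
    calc x ^ 2 = x⁻¹ * x := by rw [sq, hinv]
      _ = 1 := inv_mul_cancel x
  have := Nat.le_of_dvd two_pos (orderOf_dvd_of_pow_eq_one hsq)
  omega

end Dihedral

lemma Fin.revPerm_mul_revPerm (t : ℕ) : (revPerm : Perm (Fin t)) * revPerm = 1 := by
  ext i
  simp

lemma Fin.revPerm_mul_finRotate (t : ℕ) :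
    (revPerm : Perm (Fin t)) * finRotate t = (finRotate t)⁻¹ * revPerm := by
  ext i
  have := i.neZero
  simp [Fin.rev_add]

lemma orderOf_finRotate_of_le {t : ℕ} (ht : 2 ≤ t) : orderOf (finRotate t) = t := by
  rw [(isCycle_finRotate_of_le ht).orderOf, support_finRotate_of_le ht, card_univ,
    Fintype.card_fin]

lemma Fin.mk_add_one_mod_eq_finRotate {t : ℕ} (i : Fin t) :
    (⟨(i.val + 1) % t, Nat.mod_lt _ i.pos⟩ : Fin t) = finRotate t i := by
  have := i.neZero
  ext
  simp [Fin.val_add]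

section Sequences

variable {n t : ℕ} (a : Fin t → Fin n)

lemma isCyclicSeq_iff : IsCyclicSeq a ↔ #{i | a (finRotate t i) < a i} ≤ 1 := by
  simp only [IsCyclicSeq, Fin.mk_add_one_mod_eq_finRotate]

lemma isAntiCyclicSeq_iff : IsAntiCyclicSeq a ↔ #{i | a i < a (finRotate t i)} ≤ 1 := by
  simp only [IsAntiCyclicSeq, Fin.mk_add_one_mod_eq_finRotate]

lemma isAntiCyclicSeq_comp_iff_of_mul_eq_inv_mul {σ : Perm (Fin t)}
    (hσ : σ * finRotate t = (finRotate t)⁻¹ * σ) :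
    IsAntiCyclicSeq (fun i => a (σ i)) ↔ IsCyclicSeq a := by
  rw [isAntiCyclicSeq_iff, isCyclicSeq_iff,
    card_filter_rel_of_mul_eq_inv_mul hσ (fun i j => a i < a j)]

end Sequences

/-- For t ≥ 3, s is cyclic iff for every element of the dihedral group D_{2t}
which is not a rotation, the permuted sequence is anti-cyclic. -/
theorem cyclic_iff_forall_reflection_anticyclic {n t : ℕ} (ht : 3 ≤ t) (a : Fin t → Fin n) :
    IsCyclicSeq a ↔
      ∀ σ : Equiv.Perm (Fin t),
        σ ∈ Subgroup.closure {finRotate t, Fin.revPerm} →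
        σ ∉ Subgroup.zpowers (finRotate t) →
        IsAntiCyclicSeq (fun i => a (σ i)) := by
  have hrev := Fin.revPerm_mul_finRotate t
  refine ⟨fun hcyc σ hσ hσρ => ?_, fun h => ?_⟩
  · have hrefl := mul_eq_inv_mul_of_mem_closure_of_notMem_zpowers
      (Fin.revPerm_mul_revPerm t) hrev hσ hσρ
    exact (isAntiCyclicSeq_comp_iff_of_mul_eq_inv_mul a hrefl).mpr hcyc
  · have hrevρ : Fin.revPerm ∉ zpowers (finRotate t) :=
      notMem_zpowers_of_mul_eq_inv_mul hrev (by rw [orderOf_finRotate_of_le (by omega)]; omega)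
    exact (isAntiCyclicSeq_comp_iff_of_mul_eq_inv_mul a hrev).mp
      (h _ (subset_closure (by simp)) hrevρ)
end

section
/- A full transformation α of the chain {1, ..., n} is oriented if and only if for every non-decreasing quadruple (a1, a2, a3, a4) of elements of {1, ..., n}, the quadruple (a1 α, a2 α, a3 α, a4 α) is oriented. -/
section Helpers

variable {β : Type*} [LinearOrder β]

/-- the six cyclic patterns with exactly two strict ups and two strict downs -/
def Bad4 (v1 v2 v3 v4 : β) : Prop :=
  (v1 < v2 ∧ v3 < v2 ∧ v3 < v4 ∧ v1 < v4) ∨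
  (v2 < v1 ∧ v2 < v3 ∧ v4 < v3 ∧ v4 < v1) ∨
  (v1 < v2 ∧ v2 < v3 ∧ v4 < v3 ∧ v1 < v4) ∨
  (v2 < v1 ∧ v3 < v2 ∧ v3 < v4 ∧ v4 < v1) ∨
  (v1 < v2 ∧ v3 < v2 ∧ v4 < v3 ∧ v4 < v1) ∨
  (v2 < v1 ∧ v2 < v3 ∧ v3 < v4 ∧ v1 < v4)

lemma bad4_of_dual {v1 v2 v3 v4 : β}
    (h : Bad4 (OrderDual.toDual v1) (OrderDual.toDual v2)
      (OrderDual.toDual v3) (OrderDual.toDual v4)) : Bad4 v1 v2 v3 v4 := by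
  simp only [Bad4, OrderDual.toDual_lt_toDual] at h
  rcases h with ⟨h1,h2,h3,h4⟩|⟨h1,h2,h3,h4⟩|⟨h1,h2,h3,h4⟩|⟨h1,h2,h3,h4⟩|⟨h1,h2,h3,h4⟩|⟨h1,h2,h3,h4⟩
  · exact Or.inr (Or.inl ⟨h1,h2,h3,h4⟩)
  · exact Or.inl ⟨h1,h2,h3,h4⟩
  · exact Or.inr (Or.inr (Or.inr (Or.inl ⟨h1,h2,h3,h4⟩)))
  · exact Or.inr (Or.inr (Or.inl ⟨h1,h2,h3,h4⟩))
  · exact Or.inr (Or.inr (Or.inr (Or.inr (Or.inr ⟨h1,h2,h3,h4⟩))))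
  · exact Or.inr (Or.inr (Or.inr (Or.inr (Or.inl ⟨h1,h2,h3,h4⟩))))

lemma mono_of_steps (c : ℕ → β) :
    ∀ j i, i ≤ j → (∀ p, i ≤ p → p < j → c p ≤ c (p+1)) → c i ≤ c j := by
  intro j
  induction j with
  | zero =>
    intro i hij _
    have : i = 0 := by omega
    subst this; exact le_rfl
  | succ j ih =>
    intro i hij h
    rcases (by omega : i ≤ j ∨ i = j + 1) with h' | h'
    · exact le_trans (ih i (by omega) (fun p hp hpj => h p hp (by omega)))
        (h j (by omega) (by omega))
    · subst h'; exact le_rfl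

lemma anti_of_steps (c : ℕ → β) :
    ∀ j i, i ≤ j → (∀ p, i ≤ p → p < j → c (p+1) ≤ c p) → c j ≤ c i := by
  intro j
  induction j with
  | zero =>
    intro i hij _
    have : i = 0 := by omega
    subst this; exact le_rfl
  | succ j ih =>
    intro i hij h
    rcases (by omega : i ≤ j ∨ i = j + 1) with h' | h'
    · exact le_trans (h j (by omega) (by omega))
        (ih i (by omega) (fun p hp hpj => h p hp (by omega)))
    · subst h'; exact le_rfl

lemma exists_drop (c : ℕ → β) {i j : ℕ} (hij : i ≤ j) (h : c j < c i) :
    ∃ p, i ≤ p ∧ p < j ∧ c (p+1) < c p := by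
  by_contra hcon
  push_neg at hcon
  exact absurd (mono_of_steps c j i hij (fun p hp hpj => hcon p hp hpj)) (not_le.2 h)

lemma exists_rise (c : ℕ → β) {i j : ℕ} (hij : i ≤ j) (h : c i < c j) :
    ∃ p, i ≤ p ∧ p < j ∧ c p < c (p+1) := by
  by_contra hcon
  push_neg at hcon
  exact absurd (anti_of_steps c j i hij (fun p hp hpj => hcon p hp hpj)) (not_le.2 h)

lemma exists_max_on (c : ℕ → β) {i j : ℕ} (hij : i ≤ j) :
    ∃ p, i ≤ p ∧ p ≤ j ∧ ∀ q, i ≤ q → q ≤ j → c q ≤ c p := by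
  obtain ⟨p, hp, hmax⟩ := Finset.exists_max_image (Finset.Icc i j) c
    ⟨i, Finset.mem_Icc.2 ⟨le_rfl, hij⟩⟩
  exact ⟨p, (Finset.mem_Icc.1 hp).1, (Finset.mem_Icc.1 hp).2,
    fun q h1 h2 => hmax q (Finset.mem_Icc.2 ⟨h1, h2⟩)⟩

lemma exists_min_on (c : ℕ → β) {i j : ℕ} (hij : i ≤ j) :
    ∃ p, i ≤ p ∧ p ≤ j ∧ ∀ q, i ≤ q → q ≤ j → c p ≤ c q := by
  obtain ⟨p, hp, hmin⟩ := Finset.exists_min_image (Finset.Icc i j) c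
    ⟨i, Finset.mem_Icc.2 ⟨le_rfl, hij⟩⟩
  exact ⟨p, (Finset.mem_Icc.1 hp).1, (Finset.mem_Icc.1 hp).2,
    fun q h1 h2 => hmin q (Finset.mem_Icc.2 ⟨h1, h2⟩)⟩

lemma wrap_drop (c : ℕ → β) {n i j : ℕ} (hc : c n = c 0) (hij : i ≤ j) (hjn : j < n)
    (h : c i < c j) : ∃ p, p < n ∧ c (p+1) < c p ∧ (j ≤ p ∨ p < i) := by
  by_cases h1 : c (n-1) < c j
  · obtain ⟨p, hp1, hp2, hp3⟩ := exists_drop c (show j ≤ n-1 by omega) h1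
    exact ⟨p, by omega, hp3, Or.inl hp1⟩
  · by_cases h2 : c n < c (n-1)
    · refine ⟨n-1, by omega, ?_, Or.inl (by omega)⟩
      have : n - 1 + 1 = n := by omega
      rw [this]; exact h2
    · have h3 : c i < c 0 := by
        push_neg at h1 h2
        calc c i < c j := h
        _ ≤ c (n-1) := h1
        _ ≤ c n := h2
        _ = c 0 := hc
      obtain ⟨p, hp1, hp2, hp3⟩ := exists_drop c (Nat.zero_le i) h3
      exact ⟨p, by omega, hp3, Or.inr hp2⟩

lemma key_lemma (c : ℕ → β) (n y x : ℕ) (hc : c n = c 0) (hyx : y < x) (hxn : x < n)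
    (hy : ∀ i, i ≤ n → c y ≤ c i) (hx : ∀ i, i ≤ n → c i ≤ c x)
    (hD : ∃ p q, p < q ∧ q < n ∧ c (p+1) < c p ∧ c (q+1) < c q)
    (hA : ∃ p q, p < q ∧ q < n ∧ c p < c (p+1) ∧ c q < c (q+1)) :
    ∃ a1 a2 a3 a4, a1 ≤ a2 ∧ a2 ≤ a3 ∧ a3 ≤ a4 ∧ a4 < n ∧
      Bad4 (c a1) (c a2) (c a3) (c a4) := by
  obtain ⟨dp, dq, hdpq, hdqn, hdp, hdq⟩ := hD
  have hmlt : c y < c x :=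
    lt_of_le_of_lt (hy (dp+1) (by omega)) (lt_of_lt_of_le hdp (hx dp (by omega)))
  by_cases hA1 : ∃ d, y ≤ d ∧ d < x ∧ c (d+1) < c d
  -- Case A1 : a drop strictly between the min position and the max position
  · obtain ⟨d, hyd, hdx, hdrop⟩ := hA1
    obtain ⟨j, hj1, hj2, hjmax⟩ := exists_max_on c (show y ≤ d+1 by omega)
    obtain ⟨k, hk1, hk2, hkmin⟩ := exists_min_on c (show d+1 ≤ x by omega)
    have hdj : c d ≤ c j := hjmax d (by omega) (by omega)
    have hkd : c k ≤ c (d+1) := hkmin (d+1) (by omega) (by omega)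
    refine ⟨y, j, k, x, hj1, le_trans hj2 hk1, hk2, hxn, Or.inl ⟨?_, ?_, ?_, hmlt⟩⟩
    · exact lt_of_le_of_lt (hy (d+1) (by omega)) (lt_of_lt_of_le hdrop hdj)
    · exact lt_of_le_of_lt hkd (lt_of_lt_of_le hdrop hdj)
    · exact lt_of_le_of_lt hkd (lt_of_lt_of_le hdrop (hx d (by omega)))
  -- now c is nondecreasing from y to x
  · push_neg at hA1
    have monoYX : ∀ i j, y ≤ i → i ≤ j → j ≤ x → c i ≤ c j := by
      intro i j h1 h2 h3
      exact mono_of_steps c j i h2 (fun p hp hpj => hA1 p (by omega) (by omega))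
    by_cases hA2a : ∃ u, x ≤ u ∧ u + 1 < n ∧ c u < c (u+1)
    -- Case A2a : a rise to the right of x
    · obtain ⟨u, hxu, hun, hrise⟩ := hA2a
      obtain ⟨k, hk1, hk2, hkmin⟩ := exists_min_on c hxu
      have hku : c k ≤ c u := hkmin u hxu le_rfl
      refine ⟨y, x, k, u+1, le_of_lt hyx, hk1, by omega, by omega,
        Or.inl ⟨hmlt, ?_, ?_, ?_⟩⟩
      · exact lt_of_le_of_lt hku (lt_of_lt_of_le hrise (hx (u+1) (by omega)))
      · exact lt_of_le_of_lt hku hrise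
      · exact lt_of_le_of_lt (hy u (by omega)) hrise
    · by_cases hA2b : ∃ u, u + 1 ≤ y ∧ c u < c (u+1)
      -- Case A2b : a rise to the left of y
      · obtain ⟨u, huy, hrise⟩ := hA2b
        obtain ⟨j, hj1, hj2, hjmax⟩ := exists_max_on c (show u ≤ y by omega)
        have huj : c (u+1) ≤ c j := hjmax (u+1) (by omega) huy
        refine ⟨u, j, y, x, hj1, hj2, le_of_lt hyx, hxn,
          Or.inl ⟨lt_of_lt_of_le hrise huj, ?_, hmlt, ?_⟩⟩
        · exact lt_of_le_of_lt (hy u (by omega)) (lt_of_lt_of_le hrise huj)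
        · exact lt_of_lt_of_le hrise (hx (u+1) (by omega))
      -- Case A2c : no rises outside [y, x)
      · push_neg at hA2a hA2b
        have antiL : ∀ i j, i ≤ j → j ≤ y → c j ≤ c i := by
          intro i j h1 h2
          exact anti_of_steps c j i h1 (fun p hp hpj => hA2b p (by omega))
        have antiR : ∀ i j, x ≤ i → i ≤ j → j ≤ n - 1 → c j ≤ c i := by
          intro i j h1 h2 h3
          exact anti_of_steps c j i h2 (fun p hp hpj => hA2a p (by omega) (by omega))
        by_cases hw : c (n-1) < c 0
        -- wrap ascent : quadruple (0, y, x, n-1), pattern ↓↑↓↑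
        · have h0y : c y < c 0 := lt_of_le_of_lt (hy (n-1) (by omega)) hw
          refine ⟨0, y, x, n-1, Nat.zero_le y, le_of_lt hyx, by omega, by omega,
            Or.inr (Or.inl ⟨h0y, hmlt, lt_of_lt_of_le hw (hx 0 (by omega)), hw⟩)⟩
        -- all rises are in [y, x)
        · obtain ⟨ap, aq, hpq', hqn', hap, haq⟩ := hA
          have hrange : ∀ u, u < n → c u < c (u+1) → y ≤ u ∧ u < x := by
            intro u hun hrise
            constructor
            · by_contra hcon
              exact absurd hrise (not_lt.2 (hA2b u (by omega)))
            · by_contra hcon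
              push_neg at hcon
              rcases Nat.lt_or_ge (u+1) n with h' | h'
              · exact absurd hrise (not_lt.2 (hA2a u hcon h'))
              · have : u = n - 1 := by omega
                subst this
                have : n - 1 + 1 = n := by omega
                rw [this] at hrise
                rw [hc] at hrise
                exact absurd hrise (not_lt.2 (not_lt.1 hw))
          have hapr := hrange ap (by omega) hap
          have haqr := hrange aq hqn' haq
          -- least and greatest rises in [y, x)
          have hPex : ∃ u, y ≤ u ∧ u < x ∧ c u < c (u+1) := ⟨ap, hapr.1, hapr.2, hap⟩
          set P := fun u => y ≤ u ∧ u < x ∧ c u < c (u+1) with hP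
          let u1 := Nat.find hPex
          have hu1 : P u1 := Nat.find_spec hPex
          have hu1le : u1 ≤ ap := Nat.find_min' hPex ⟨hapr.1, hapr.2, hap⟩
          have hu1min : ∀ v, v < u1 → ¬ P v := fun v hv => Nat.find_min hPex hv
          let u2 := Nat.findGreatest P x
          have hu2 : P u2 := Nat.findGreatest_spec (le_of_lt haqr.2) ⟨haqr.1, haqr.2, haq⟩
          have hu2ge : aq ≤ u2 := Nat.le_findGreatest (le_of_lt haqr.2) ⟨haqr.1, haqr.2, haq⟩
          have hu2max : ∀ v, u2 < v → v ≤ x → ¬ P v :=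
            fun v hv hvx => Nat.findGreatest_is_greatest hv hvx
          have hu12 : u1 < u2 := by omega
          -- c u1 = c y
          have hu1y : c u1 = c y := by
            have h1 : c u1 ≤ c y := by
              refine anti_of_steps c u1 y hu1.1 (fun p hp hpj => ?_)
              have : ¬ P p := hu1min p hpj
              simp only [hP] at this
              push_neg at this
              exact not_lt.1 (by simpa [hp, show p < x by omega] using this)
            exact le_antisymm h1 (hy u1 (by omega))
          -- c (u2+1) = c x
          have hu2x : c (u2+1) = c x := by
            have h1 : c x ≤ c (u2+1) := by
              refine anti_of_steps c x (u2+1) hu2.2.1 (fun p hp hpj => ?_)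
              have : ¬ P p := hu2max p (by omega) (by omega)
              simp only [hP] at this
              push_neg at this
              exact not_lt.1 (by simpa [show y ≤ p by omega, show p < x by omega] using this)
            exact le_antisymm (hx (u2+1) (by omega)) h1
          have hyu2 : c y < c u2 := by
            rw [← hu1y]
            exact lt_of_lt_of_le hu1.2.2 (monoYX (u1+1) u2 (by omega) (by omega) (by omega))
          have hu2lx : c u2 < c x := by rw [← hu2x]; exact hu2.2.2
          have hu1u2 : c u1 < c u2 := by rw [hu1y]; exact hyu2
          have hu1x : c u1 < c x := by rw [hu1y]; exact hmlt
          -- classify the two drops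
          have hclass : ∀ d, d < n → c (d+1) < c d → d < y ∨ x ≤ d := by
            intro d hdn hdrop
            by_contra hcon
            push_neg at hcon
            exact absurd hdrop (not_lt.2 (hA1 d (by omega) (by omega)))
          rcases hclass dp (by omega) hdp with hdpL | hdpR
          · rcases hclass dq (by omega) hdq with hdqL | hdqR
            -- both drops to the left of y : quadruple (dp+1, y, u2, x), pattern ↓↑↑↓
            · have h1 : c y < c (dp+1) :=
                lt_of_le_of_lt (hy (dq+1) (by omega))
                  (lt_of_lt_of_le hdq (antiL (dp+1) dq (by omega) (by omega)))
              refine ⟨dp+1, y, u2, x, by omega, by omega, by omega, hxn,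
                Or.inr (Or.inr (Or.inr (Or.inr (Or.inr
                  ⟨h1, hyu2, hu2lx, lt_of_lt_of_le hdp (hx dp (by omega))⟩))))⟩
            -- dp left of y, dq right of x
            · rcases Nat.lt_or_ge (dq+1) n with hdq1 | hdq1
              · by_cases hcmp : c (dq+1) < c dp
                -- quadruple (dp, y, x, dq+1), pattern ↓↑↓↑
                · refine ⟨dp, y, x, dq+1, by omega, by omega, by omega, hdq1,
                    Or.inr (Or.inl ⟨lt_of_le_of_lt (hy (dp+1) (by omega)) hdp, hmlt,
                      lt_of_lt_of_le hdq (hx dq (by omega)), hcmp⟩)⟩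
                -- quadruple (u1, u2, x, dq+1), pattern ↑↑↓↓
                · push_neg at hcmp
                  have h4 : c u1 < c (dq+1) := by
                    rw [hu1y]
                    exact lt_of_le_of_lt (hy (dp+1) (by omega)) (lt_of_lt_of_le hdp hcmp)
                  refine ⟨u1, u2, x, dq+1, by omega, by omega, by omega, hdq1,
                    Or.inr (Or.inr (Or.inl ⟨hu1u2, hu2lx,
                      lt_of_lt_of_le hdq (hx dq (by omega)), h4⟩))⟩
              -- dq = n-1 : wrap descent
              · have hdq' : dq = n - 1 := by omega
                have hwd : c 0 < c (n-1) := by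
                  have h5 : dq + 1 = n := by omega
                  have h6 := hdq
                  rw [h5, hdq', hc] at h6
                  exact h6
                by_cases hcm : c (n-1) < c x
                -- quadruple (u1, u2, x, n-1), pattern ↑↑↓↓
                · have h4 : c u1 < c (n-1) := by
                    rw [hu1y]
                    exact lt_of_le_of_lt (hy 0 (by omega)) hwd
                  refine ⟨u1, u2, x, n-1, by omega, by omega, by omega, by omega,
                    Or.inr (Or.inr (Or.inl ⟨hu1u2, hu2lx, hcm, h4⟩))⟩
                -- c (n-1) = c x : quadruple (0, y, u2, x), pattern ↓↑↑↓
                · push_neg at hcm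
                  have h1 : c y < c 0 :=
                    lt_of_le_of_lt (hy (dp+1) (by omega))
                      (lt_of_lt_of_le hdp (antiL 0 dp (by omega) (by omega)))
                  have h4 : c 0 < c x :=
                    lt_of_lt_of_le hwd (le_of_eq (le_antisymm (hx (n-1) (by omega)) hcm))
                  refine ⟨0, y, u2, x, by omega, by omega, by omega, hxn,
                    Or.inr (Or.inr (Or.inr (Or.inr (Or.inr ⟨h1, hyu2, hu2lx, h4⟩))))⟩
          -- both drops to the right of x : quadruple (u1, u2, x, dp+1), pattern ↑↑↓↓
          · have hdqR : x ≤ dq := by omega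
            have h3 : c (dp+1) < c x := lt_of_lt_of_le hdp (hx dp (by omega))
            rcases Nat.lt_or_ge (dq+1) n with hdq1 | hdq1
            · have h4 : c u1 < c (dp+1) := by
                rw [hu1y]
                exact lt_of_le_of_lt (hy (dq+1) (by omega))
                  (lt_of_lt_of_le hdq (antiR (dp+1) dq (by omega) (by omega) (by omega)))
              refine ⟨u1, u2, x, dp+1, by omega, by omega, by omega, by omega,
                Or.inr (Or.inr (Or.inl ⟨hu1u2, hu2lx, h3, h4⟩))⟩
            · have hdq' : dq = n - 1 := by omega
              have hwd : c 0 < c (n-1) := by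
                have h5 : dq + 1 = n := by omega
                have h6 := hdq
                rw [h5, hdq', hc] at h6
                exact h6
              have h4 : c u1 < c (dp+1) := by
                rw [hu1y]
                exact lt_of_le_of_lt (hy 0 (by omega))
                  (lt_of_lt_of_le hwd (antiR (dp+1) (n-1) (by omega) (by omega) (by omega)))
              refine ⟨u1, u2, x, dp+1, by omega, by omega, by omega, by omega,
                Or.inr (Or.inr (Or.inl ⟨hu1u2, hu2lx, h3, h4⟩))⟩

end Helpers

section FinGlue

variable {n : ℕ}

/-- the sequence of an `α : Fin n → Fin n`, as a function on `ℕ` -/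
def cseq (α : Fin n → Fin n) (hn : 0 < n) : ℕ → Fin n :=
  fun i => α ⟨i % n, Nat.mod_lt _ hn⟩

lemma cseq_apply (α : Fin n → Fin n) (hn : 0 < n) (i : Fin n) :
    cseq α hn i.val = α i := by
  unfold cseq
  congr 1
  exact Fin.ext (Nat.mod_eq_of_lt i.isLt)

lemma cseq_wrap (α : Fin n → Fin n) (hn : 0 < n) : cseq α hn n = cseq α hn 0 := by
  unfold cseq
  congr 1
  exact Fin.ext (by simp)

lemma isCyclic_iff (α : Fin n → Fin n) (hn : 0 < n) :
    IsCyclicSeq α ↔ ∀ p q, p < n → q < n →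
      cseq α hn (p+1) < cseq α hn p → cseq α hn (q+1) < cseq α hn q → p = q := by
  unfold IsCyclicSeq
  constructor
  · intro h p q hp hq dp dq
    by_contra hne
    have h1 : (⟨p, hp⟩ : Fin n) ∈ Finset.univ.filter (fun i : Fin n =>
        α ⟨(i.val + 1) % n, Nat.mod_lt _ i.pos⟩ < α i) := by
      refine Finset.mem_filter.2 ⟨Finset.mem_univ _, ?_⟩
      rw [← cseq_apply α hn ⟨p, hp⟩]
      exact dp
    have h2 : (⟨q, hq⟩ : Fin n) ∈ Finset.univ.filter (fun i : Fin n =>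
        α ⟨(i.val + 1) % n, Nat.mod_lt _ i.pos⟩ < α i) := by
      refine Finset.mem_filter.2 ⟨Finset.mem_univ _, ?_⟩
      rw [← cseq_apply α hn ⟨q, hq⟩]
      exact dq
    have := Finset.one_lt_card.2 ⟨_, h1, _, h2, by simp [Fin.ext_iff]; exact hne⟩
    omega
  · intro h
    refine Finset.card_le_one.2 (fun a ha b hb => ?_)
    have ha' := (Finset.mem_filter.1 ha).2
    have hb' := (Finset.mem_filter.1 hb).2
    rw [← cseq_apply α hn a] at ha'
    rw [← cseq_apply α hn b] at hb'
    exact Fin.ext (h a.val b.val a.isLt b.isLt ha' hb')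

lemma anti_iff_rev {t : ℕ} (a : Fin t → Fin n) :
    IsAntiCyclicSeq a ↔ IsCyclicSeq (Fin.rev ∘ a) := by
  unfold IsAntiCyclicSeq IsCyclicSeq
  simp only [Function.comp_apply, Fin.rev_lt_rev]

lemma comp_vec4 (f : Fin n → Fin n) (v1 v2 v3 v4 : Fin n) :
    f ∘ ![v1, v2, v3, v4] = ![f v1, f v2, f v3, f v4] := by
  funext i
  fin_cases i <;> rfl

end FinGlue

section Quad

variable {n : ℕ}

lemma two_descents (b : Fin 4 → Fin n) (i j : ℕ) (hi4 : i < 4) (hj4 : j < 4)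
    (hij : i ≠ j)
    (hi : b ⟨(i + 1) % 4, Nat.mod_lt _ (by omega)⟩ < b ⟨i, hi4⟩)
    (hj : b ⟨(j + 1) % 4, Nat.mod_lt _ (by omega)⟩ < b ⟨j, hj4⟩) : ¬ IsCyclicSeq b := by
  intro h
  unfold IsCyclicSeq at h
  have hi' : (⟨i, hi4⟩ : Fin 4) ∈ Finset.univ.filter (fun k : Fin 4 =>
      b ⟨(k.val + 1) % 4, Nat.mod_lt _ k.pos⟩ < b k) :=
    Finset.mem_filter.2 ⟨Finset.mem_univ _, hi⟩
  have hj' : (⟨j, hj4⟩ : Fin 4) ∈ Finset.univ.filter (fun k : Fin 4 =>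
      b ⟨(k.val + 1) % 4, Nat.mod_lt _ k.pos⟩ < b k) :=
    Finset.mem_filter.2 ⟨Finset.mem_univ _, hj⟩
  have := Finset.one_lt_card.2 ⟨_, hi', _, hj', by simpa [Fin.ext_iff] using hij⟩
  omega

lemma two_ascents (b : Fin 4 → Fin n) (i j : ℕ) (hi4 : i < 4) (hj4 : j < 4)
    (hij : i ≠ j)
    (hi : b ⟨i, hi4⟩ < b ⟨(i + 1) % 4, Nat.mod_lt _ (by omega)⟩)
    (hj : b ⟨j, hj4⟩ < b ⟨(j + 1) % 4, Nat.mod_lt _ (by omega)⟩) : ¬ IsAntiCyclicSeq b := by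
  intro h
  unfold IsAntiCyclicSeq at h
  have hi' : (⟨i, hi4⟩ : Fin 4) ∈ Finset.univ.filter (fun k : Fin 4 =>
      b k < b ⟨(k.val + 1) % 4, Nat.mod_lt _ k.pos⟩) :=
    Finset.mem_filter.2 ⟨Finset.mem_univ _, hi⟩
  have hj' : (⟨j, hj4⟩ : Fin 4) ∈ Finset.univ.filter (fun k : Fin 4 =>
      b k < b ⟨(k.val + 1) % 4, Nat.mod_lt _ k.pos⟩) :=
    Finset.mem_filter.2 ⟨Finset.mem_univ _, hj⟩
  have := Finset.one_lt_card.2 ⟨_, hi', _, hj', by simpa [Fin.ext_iff] using hij⟩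
  omega

lemma not_oriented_of_bad4 {v1 v2 v3 v4 : Fin n} (h : Bad4 v1 v2 v3 v4) :
    ¬ IsOrientedSeq ![v1, v2, v3, v4] := by
  rintro (hc | ha) <;>
    rcases h with ⟨h1,h2,h3,h4⟩|⟨h1,h2,h3,h4⟩|⟨h1,h2,h3,h4⟩|⟨h1,h2,h3,h4⟩|⟨h1,h2,h3,h4⟩|⟨h1,h2,h3,h4⟩
  -- cyclic refuted : exhibit two descents
  · exact two_descents _ 1 3 (by omega) (by omega) (by omega) h2 h4 hc
  · exact two_descents _ 0 2 (by omega) (by omega) (by omega) h1 h3 hc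
  · exact two_descents _ 2 3 (by omega) (by omega) (by omega) h3 h4 hc
  · exact two_descents _ 0 1 (by omega) (by omega) (by omega) h1 h2 hc
  · exact two_descents _ 1 2 (by omega) (by omega) (by omega) h2 h3 hc
  · exact two_descents _ 0 3 (by omega) (by omega) (by omega) h1 h4 hc
  -- anti-cyclic refuted : exhibit two ascents
  · exact two_ascents _ 0 2 (by omega) (by omega) (by omega) h1 h3 ha
  · exact two_ascents _ 1 3 (by omega) (by omega) (by omega) h2 h4 ha
  · exact two_ascents _ 0 1 (by omega) (by omega) (by omega) h1 h2 ha
  · exact two_ascents _ 2 3 (by omega) (by omega) (by omega) h3 h4 ha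
  · exact two_ascents _ 0 3 (by omega) (by omega) (by omega) h1 h4 ha
  · exact two_ascents _ 1 2 (by omega) (by omega) (by omega) h2 h3 ha

end Quad

lemma fwd_cyclic {n : ℕ} (α : Fin n → Fin n) (hcy : IsCyclicSeq α) (a1 a2 a3 a4 : Fin n)
    (h12 : a1 ≤ a2) (h23 : a2 ≤ a3) (h34 : a3 ≤ a4) :
    IsCyclicSeq ![α a1, α a2, α a3, α a4] := by
  have hn : 0 < n := a1.pos
  have h12' : a1.val ≤ a2.val := h12
  have h23' : a2.val ≤ a3.val := h23
  have h34' : a3.val ≤ a4.val := h34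
  by_contra hb
  unfold IsCyclicSeq at hb
  push_neg at hb
  obtain ⟨i, hi, j, hj, hij⟩ := Finset.one_lt_card.1 hb
  have hi2 := (Finset.mem_filter.1 hi).2
  have hj2 := (Finset.mem_filter.1 hj).2
  have hkey : ∀ k : Fin 4,
      (![α a1, α a2, α a3, α a4] ⟨(k.val + 1) % 4, Nat.mod_lt _ k.pos⟩
        < ![α a1, α a2, α a3, α a4] k) →
      ∃ p, p < n ∧ cseq α hn (p+1) < cseq α hn p ∧
        ((k.val = 0 ∧ a1.val ≤ p ∧ p < a2.val) ∨
         (k.val = 1 ∧ a2.val ≤ p ∧ p < a3.val) ∨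
         (k.val = 2 ∧ a3.val ≤ p ∧ p < a4.val) ∨
         (k.val = 3 ∧ (a4.val ≤ p ∨ p < a1.val))) := by
    intro k hk
    fin_cases k
    · have e : α a2 < α a1 := by simpa using hk
      rw [← cseq_apply α hn a1, ← cseq_apply α hn a2] at e
      obtain ⟨p, hp1, hp2, hp3⟩ := exists_drop (cseq α hn) h12' e
      exact ⟨p, by omega, hp3, Or.inl ⟨rfl, hp1, hp2⟩⟩
    · have e : α a3 < α a2 := by simpa using hk
      rw [← cseq_apply α hn a2, ← cseq_apply α hn a3] at e
      obtain ⟨p, hp1, hp2, hp3⟩ := exists_drop (cseq α hn) h23' e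
      exact ⟨p, by omega, hp3, Or.inr (Or.inl ⟨rfl, hp1, hp2⟩)⟩
    · have e : α a4 < α a3 := by simpa using hk
      rw [← cseq_apply α hn a3, ← cseq_apply α hn a4] at e
      obtain ⟨p, hp1, hp2, hp3⟩ := exists_drop (cseq α hn) h34' e
      exact ⟨p, by omega, hp3, Or.inr (Or.inr (Or.inl ⟨rfl, hp1, hp2⟩))⟩
    · have e : α a1 < α a4 := by simpa using hk
      rw [← cseq_apply α hn a1, ← cseq_apply α hn a4] at e
      obtain ⟨p, hp1, hp2, hp3⟩ := wrap_drop (cseq α hn) (cseq_wrap α hn)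
        (show a1.val ≤ a4.val by omega) a4.isLt e
      exact ⟨p, hp1, hp2, Or.inr (Or.inr (Or.inr ⟨rfl, hp3⟩))⟩
  obtain ⟨p, hpn, hpd, hpr⟩ := hkey i hi2
  obtain ⟨q, hqn, hqd, hqr⟩ := hkey j hj2
  have hvij : i.val ≠ j.val := fun h => hij (Fin.ext h)
  have hpq : p ≠ q := by omega
  exact hpq (isCyclic_iff α hn |>.1 hcy p q hpn hqn hpd hqd)

/-- A full transformation α of {1,…,n} is oriented iff the image of every
non-decreasing quadruple is oriented. -/
theorem oriented_iff_nondecreasing_quadruples {n : ℕ} (α : Fin n → Fin n) :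
    IsOrientedSeq α ↔
      ∀ a₁ a₂ a₃ a₄ : Fin n, a₁ ≤ a₂ → a₂ ≤ a₃ → a₃ ≤ a₄ →
        IsOrientedSeq ![α a₁, α a₂, α a₃, α a₄] := by
  constructor
  · rintro (h | h) a1 a2 a3 a4 h12 h23 h34
    · exact Or.inl (fwd_cyclic α h a1 a2 a3 a4 h12 h23 h34)
    · refine Or.inr ((anti_iff_rev _).2 ?_)
      have h2 := fwd_cyclic (Fin.rev ∘ α) ((anti_iff_rev α).1 h) a1 a2 a3 a4 h12 h23 h34
      rwa [show ![(Fin.rev ∘ α) a1, (Fin.rev ∘ α) a2, (Fin.rev ∘ α) a3, (Fin.rev ∘ α) a4]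
        = Fin.rev ∘ ![α a1, α a2, α a3, α a4] from
          (comp_vec4 Fin.rev (α a1) (α a2) (α a3) (α a4)).symm] at h2
  · intro h
    by_contra hno
    unfold IsOrientedSeq at hno
    push_neg at hno
    obtain ⟨hC, hA⟩ := hno
    have hn : 0 < n := by
      rcases Nat.eq_zero_or_pos n with h0 | h0
      · exfalso
        apply hC
        subst h0
        unfold IsCyclicSeq
        simp
      · exact h0
    set c := cseq α hn with hcdef
    have hw : c n = c 0 := cseq_wrap α hn
    -- two distinct drops
    rw [isCyclic_iff α hn] at hC
    push_neg at hC
    obtain ⟨p, q, hpn, hqn, hdp, hdq, hpq⟩ := hC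
    -- two distinct rises
    have hA' : ¬ IsCyclicSeq (Fin.rev ∘ α) := fun hh => hA ((anti_iff_rev α).2 hh)
    rw [isCyclic_iff (Fin.rev ∘ α) hn] at hA'
    push_neg at hA'
    obtain ⟨r, s, hrn, hsn, hdr, hds, hrs⟩ := hA'
    have hur : c r < c (r+1) := Fin.rev_lt_rev.1 hdr
    have hus : c s < c (s+1) := Fin.rev_lt_rev.1 hds
    -- min and max positions
    obtain ⟨y, hy0, hymin⟩ := Finset.exists_min_image (Finset.range n) c ⟨0, Finset.mem_range.2 hn⟩
    obtain ⟨x, hx0, hxmax⟩ := Finset.exists_max_image (Finset.range n) c ⟨0, Finset.mem_range.2 hn⟩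
    have hyn : y < n := Finset.mem_range.1 hy0
    have hxn : x < n := Finset.mem_range.1 hx0
    have hy : ∀ i, i ≤ n → c y ≤ c i := by
      intro i hi
      rcases Nat.lt_or_ge i n with h' | h'
      · exact hymin i (Finset.mem_range.2 h')
      · have : i = n := by omega
        rw [this, hw]
        exact hymin 0 (Finset.mem_range.2 hn)
    have hx : ∀ i, i ≤ n → c i ≤ c x := by
      intro i hi
      rcases Nat.lt_or_ge i n with h' | h'
      · exact hxmax i (Finset.mem_range.2 h')
      · have : i = n := by omega
        rw [this, hw]
        exact hxmax 0 (Finset.mem_range.2 hn)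
    have hD : ∃ p' q', p' < q' ∧ q' < n ∧ c (p'+1) < c p' ∧ c (q'+1) < c q' := by
      rcases Nat.lt_or_ge p q with h' | h'
      · exact ⟨p, q, h', hqn, hdp, hdq⟩
      · exact ⟨q, p, by omega, hpn, hdq, hdp⟩
    have hAex : ∃ p' q', p' < q' ∧ q' < n ∧ c p' < c (p'+1) ∧ c q' < c (q'+1) := by
      rcases Nat.lt_or_ge r s with h' | h'
      · exact ⟨r, s, h', hsn, hur, hus⟩
      · exact ⟨s, r, by omega, hrn, hus, hur⟩
    have hylx : c y < c x := by
      obtain ⟨p', q', _, hq'n, hdp', _⟩ := hD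
      exact lt_of_le_of_lt (hy (p'+1) (by omega)) (lt_of_lt_of_le hdp' (hx p' (by omega)))
    have hyx : y ≠ x := fun h' => by rw [h'] at hylx; exact lt_irrefl _ hylx
    have hbad : ∃ a1 a2 a3 a4, a1 ≤ a2 ∧ a2 ≤ a3 ∧ a3 ≤ a4 ∧ a4 < n ∧
        Bad4 (c a1) (c a2) (c a3) (c a4) := by
      rcases Nat.lt_or_ge y x with hlt | hge
      · exact key_lemma c n y x hw hlt hxn hy hx hD hAex
      · have hlt : x < y := by omega
        have hkey := key_lemma (fun i => OrderDual.toDual (c i)) n x y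
          (congrArg OrderDual.toDual hw) hlt hyn
          (fun i hi => hx i hi) (fun i hi => hy i hi)
          (by obtain ⟨p', q', h1, h2, h3, h4⟩ := hAex; exact ⟨p', q', h1, h2, h3, h4⟩)
          (by obtain ⟨p', q', h1, h2, h3, h4⟩ := hD; exact ⟨p', q', h1, h2, h3, h4⟩)
        obtain ⟨a1, a2, a3, a4, g1, g2, g3, g4, g5⟩ := hkey
        exact ⟨a1, a2, a3, a4, g1, g2, g3, g4, bad4_of_dual g5⟩
    obtain ⟨a1, a2, a3, a4, g1, g2, g3, g4, g5⟩ := hbad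
    have ha1 : a1 < n := by omega
    have ha2 : a2 < n := by omega
    have ha3 : a3 < n := by omega
    have hor := h ⟨a1, ha1⟩ ⟨a2, ha2⟩ ⟨a3, ha3⟩ ⟨a4, g4⟩
      (Fin.mk_le_mk.2 g1) (Fin.mk_le_mk.2 g2) (Fin.mk_le_mk.2 g3)
    have e1 : c a1 = α ⟨a1, ha1⟩ := cseq_apply α hn ⟨a1, ha1⟩
    have e2 : c a2 = α ⟨a2, ha2⟩ := cseq_apply α hn ⟨a2, ha2⟩
    have e3 : c a3 = α ⟨a3, ha3⟩ := cseq_apply α hn ⟨a3, ha3⟩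
    have e4 : c a4 = α ⟨a4, g4⟩ := cseq_apply α hn ⟨a4, g4⟩
    rw [e1, e2, e3, e4] at g5
    exact not_oriented_of_bad4 g5 hor
end

section
/- A full transformation α of the chain {1, ..., n} is oriented if and only if every restriction of α to a four-element subset is oriented as a partial transformation. -/
/-!
A cyclic descent of `a` is an index `i` with `a (i + 1) < a i`, indices taken mod the length.
Descents of a restriction `a ∘ u` to positions `u 0 < ⋯ < u k` can be charged injectively to
descents of `a`: a descent from `u j` to `u (j + 1)` forces one on the cyclic arc between them,
and these arcs are disjoint. Hence orientedness passes to restrictions.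

Conversely, suppose `a` has two descents and two ascents. Rotate so that a minimum sits at `0`
and let `M` be a position of a maximum. A descent before `M`, or an ascent after it, yields a
four-point restriction with pattern up-down-up-down; otherwise `a` is unimodal, and the later of
two ascents and the later of two descents give the pattern up-up-down-down. Rotating back, the
four positions become increasing after a cyclic shift of `Fin 4`, because a rotated increasing
tuple has at most one cyclic descent.
-/

open Finset OrderDual

section CyclicDescents

variable {β : Type*} [LinearOrder β] {t k : ℕ}

def cyclicDescents (a : Fin (t + 1) → β) : Finset (Fin (t + 1)) := {i | a (i + 1) < a i}

@[simp]
lemma mem_cyclicDescents {a : Fin (t + 1) → β} {i : Fin (t + 1)} :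
    i ∈ cyclicDescents a ↔ a (i + 1) < a i := by
  simp [cyclicDescents]

/-- Ascents of `a` are the cyclic descents of `toDual ∘ a`. -/
def IsOriented (a : Fin (t + 1) → β) : Prop :=
  #(cyclicDescents a) ≤ 1 ∨ #(cyclicDescents (toDual ∘ a)) ≤ 1

lemma isOrientedSeq_iff_isOriented {n : ℕ} (a : Fin (t + 1) → Fin n) :
    IsOrientedSeq a ↔ IsOriented a := by
  have hsucc (i : Fin (t + 1)) :
      (⟨(i.val + 1) % (t + 1), Nat.mod_lt _ i.pos⟩ : Fin (t + 1)) = i + 1 :=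
    Fin.ext (by simp [Fin.val_add])
  simp only [IsOrientedSeq, IsCyclicSeq, IsAntiCyclicSeq, IsOriented, hsucc]
  rfl

lemma card_cyclicDescents_comp_add_right (a : Fin (t + 1) → β) (c : Fin (t + 1)) :
    #(cyclicDescents fun i => a (i + c)) = #(cyclicDescents a) :=
  card_equiv (Equiv.addRight c) fun i => by simp [add_right_comm]

lemma isOriented_comp_add_right_iff (a : Fin (t + 1) → β) (c : Fin (t + 1)) :
    IsOriented (fun i => a (i + c)) ↔ IsOriented a := by
  simp only [IsOriented]
  rw [card_cyclicDescents_comp_add_right, ← card_cyclicDescents_comp_add_right (toDual ∘ a) c]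
  rfl

lemma exists_mem_cyclicDescents_of_lt {a : Fin (t + 1) → β} {x y : Fin (t + 1)} (hxy : x ≤ y)
    (h : a y < a x) : ∃ p ∈ cyclicDescents a, x ≤ p ∧ p < y := by
  induction y using Fin.induction with
  | zero => exact absurd h (by rw [le_antisymm hxy (Fin.zero_le x)]; exact lt_irrefl _)
  | succ z ih =>
    have hxz : x ≤ z.castSucc := Fin.le_castSucc_iff.2 (hxy.lt_of_ne (ne_of_apply_ne a h.ne'))
    by_cases hz : a z.succ < a z.castSucc
    · exact ⟨z.castSucc, by simpa [Fin.coeSucc_eq_succ], hxz, Fin.castSucc_lt_succ⟩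
    · obtain ⟨p, hp, hxp, hpz⟩ := ih hxz ((not_lt.1 hz).trans_lt h)
      exact ⟨p, hp, hxp, hpz.trans Fin.castSucc_lt_succ⟩

def cyclicIco (x y : Fin (t + 1)) : Finset (Fin (t + 1)) :=
  if x ≤ y then Ico x y else Ici x ∪ Iio y

lemma mem_cyclicIco_of_le {x y p : Fin (t + 1)} (hxy : x ≤ y) :
    p ∈ cyclicIco x y ↔ x ≤ p ∧ p < y := by
  simp [cyclicIco, hxy]

lemma mem_cyclicIco_of_lt {x y p : Fin (t + 1)} (hyx : y < x) :
    p ∈ cyclicIco x y ↔ x ≤ p ∨ p < y := by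
  simp [cyclicIco, hyx.not_ge]

lemma exists_mem_cyclicDescents_cyclicIco {a : Fin (t + 1) → β} {x y : Fin (t + 1)}
    (h : a y < a x) : ∃ p ∈ cyclicDescents a, p ∈ cyclicIco x y := by
  rcases le_or_gt x y with hxy | hyx
  · obtain ⟨p, hp, hxp, hpy⟩ := exists_mem_cyclicDescents_of_lt hxy h
    exact ⟨p, hp, (mem_cyclicIco_of_le hxy).2 ⟨hxp, hpy⟩⟩
  have hmem (p : Fin (t + 1)) (hp : x ≤ p ∨ p < y) : p ∈ cyclicIco x y :=
    (mem_cyclicIco_of_lt hyx).2 hp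
  -- walk from `x` to the last position, across the wrap-around, then from `0` to `y`
  by_cases hlast : a (Fin.last t) < a x
  · obtain ⟨p, hp, hxp, -⟩ := exists_mem_cyclicDescents_of_lt (Fin.le_last x) hlast
    exact ⟨p, hp, hmem p (Or.inl hxp)⟩
  by_cases hwrap : a 0 < a (Fin.last t)
  · exact ⟨Fin.last t, by simpa using hwrap, hmem _ (Or.inl (Fin.le_last x))⟩
  obtain ⟨p, hp, -, hpy⟩ := exists_mem_cyclicDescents_of_lt (Fin.zero_le y)
    (h.trans_le ((not_lt.1 hlast).trans (not_lt.1 hwrap)))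
  exact ⟨p, hp, hmem p (Or.inr hpy)⟩

lemma eq_of_mem_cyclicIco {u : Fin (k + 1) → Fin (t + 1)} (hu : StrictMono u)
    {i j : Fin (k + 1)} {p : Fin (t + 1)} (hi : p ∈ cyclicIco (u i) (u (i + 1)))
    (hj : p ∈ cyclicIco (u j) (u (j + 1))) : i = j := by
  by_contra hne
  wlog hij : i < j generalizing i j
  · exact this hj hi (Ne.symm hne) ((Ne.symm hne).lt_of_le (not_lt.1 hij))
  have hi1 : i < i + 1 := Fin.lt_add_one_iff.2 (hij.trans_le (Fin.le_last j))
  obtain ⟨hip, hpi⟩ := (mem_cyclicIco_of_le (hu.monotone hi1.le)).1 hi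
  have hpj : p < u j := hpi.trans_le (hu.monotone (Fin.add_one_le_of_lt hij))
  rcases (Fin.le_last j).lt_or_eq with hj_last | rfl
  · have hj1 : u j ≤ u (j + 1) := hu.monotone (Fin.lt_add_one_iff.2 hj_last).le
    exact hpj.not_ge ((mem_cyclicIco_of_le hj1).1 hj).1
  rw [Fin.last_add_one] at hj
  rcases (mem_cyclicIco_of_lt (hu ((Fin.zero_le i).trans_lt hij))).1 hj with h | h
  · exact hpj.not_ge h
  · exact h.not_ge ((hu.monotone (Fin.zero_le i)).trans hip)

theorem card_cyclicDescents_comp_le (a : Fin (t + 1) → β) {u : Fin (k + 1) → Fin (t + 1)}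
    (hu : StrictMono u) : #(cyclicDescents (a ∘ u)) ≤ #(cyclicDescents a) :=
  card_le_card_of_forall_subsingleton (fun j p => p ∈ cyclicIco (u j) (u (j + 1)))
    (fun _ hj => exists_mem_cyclicDescents_cyclicIco (mem_cyclicDescents.1 hj))
    (fun _ _ _ hi _ hj => eq_of_mem_cyclicIco hu hi.2 hj.2)

theorem IsOriented.comp_strictMono {a : Fin (t + 1) → β} (ha : IsOriented a)
    {u : Fin (k + 1) → Fin (t + 1)} (hu : StrictMono u) : IsOriented (a ∘ u) :=
  ha.imp (card_cyclicDescents_comp_le a hu).trans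
    (card_cyclicDescents_comp_le (toDual ∘ a) hu).trans

lemma card_cyclicDescents_add_right_le_one (m : Fin (t + 1)) :
    #(cyclicDescents fun i => i + m) ≤ 1 := by
  have hlast (i : Fin (t + 1)) (hi : i ∈ cyclicDescents fun i => i + m) : i + m = Fin.last t := by
    rw [mem_cyclicDescents, add_right_comm] at hi
    by_contra hne
    exact hi.not_gt (Fin.lt_add_one_iff.2 ((Fin.le_last _).lt_of_ne hne))
  exact card_le_one.2 fun i hi j hj => add_right_cancel ((hlast i hi).trans (hlast j hj).symm)

lemma exists_strictMono_comp_add_right {f : Fin (k + 1) → β} (hf : Function.Injective f)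
    (h : #(cyclicDescents f) ≤ 1) : ∃ c, StrictMono fun i => f (i + c) := by
  obtain ⟨d, hd⟩ := card_le_one_iff_subset_singleton.1 h
  refine ⟨d + 1, Fin.strictMono_iff_lt_succ.2 fun i => ?_⟩
  have hne : f (i.castSucc + (d + 1)) ≠ f (i.succ + (d + 1)) :=
    hf.ne ((add_left_injective _).ne Fin.castSucc_lt_succ.ne)
  refine lt_of_le_of_ne (not_lt.1 fun hlt => ?_) hne
  have hd' : i.castSucc + (d + 1) ∈ ({d} : Finset _) :=
    hd (mem_cyclicDescents.2 (by rwa [add_right_comm, Fin.coeSucc_eq_succ]))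
  rw [mem_singleton, add_comm d 1, ← add_assoc, Fin.coeSucc_eq_succ, add_eq_right] at hd'
  exact Fin.succ_ne_zero _ hd'

lemma exists_strictMono_add_right_comp {w : Fin (k + 1) → Fin (t + 1)} (hw : StrictMono w)
    (m : Fin (t + 1)) : ∃ c, StrictMono fun i => w (i + c) + m :=
  exists_strictMono_comp_add_right ((add_left_injective m).comp hw.injective)
    ((card_cyclicDescents_comp_le (· + m) hw).trans (card_cyclicDescents_add_right_le_one m))

lemma not_isOriented_of_two_descents_of_two_ascents {a : Fin (k + 1) → β}
    {i j i' j' : Fin (k + 1)}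
    (hi : a (i + 1) < a i) (hj : a (j + 1) < a j) (hij : i ≠ j)
    (hi' : a i' < a (i' + 1)) (hj' : a j' < a (j' + 1)) (hij' : i' ≠ j') : ¬ IsOriented a := by
  rintro (h | h) <;> refine h.not_gt (one_lt_card.2 ?_)
  · exact ⟨i, mem_cyclicDescents.2 hi, j, mem_cyclicDescents.2 hj, hij⟩
  · exact ⟨i', mem_cyclicDescents.2 hi', j', mem_cyclicDescents.2 hj', hij'⟩

section MinAtZero

variable {b : Fin (t + 1) → β} {M : Fin (t + 1)}

lemma exists_not_isOriented_comp_of_descent_lt_max (h0 : ∀ i, b 0 ≤ b i) (hM : ∀ i, b i ≤ b M)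
    {p : Fin (t + 1)} (hpM : p < M) (hp : b (p + 1) < b p) :
    ∃ w : Fin 4 → Fin (t + 1), StrictMono w ∧ ¬ IsOriented (b ∘ w) := by
  have h0p : b 0 < b p := (h0 _).trans_lt hp
  have hpM' : b (p + 1) < b M := hp.trans_le (hM p)
  have h₀₁ : 0 < p := (Fin.zero_le p).lt_of_ne (ne_of_apply_ne b h0p.ne)
  have h₁₂ : p < p + 1 := Fin.lt_add_one_iff.2 (hpM.trans_le (Fin.le_last M))
  have h₂₃ : p + 1 < M := (Fin.add_one_le_of_lt hpM).lt_of_ne (ne_of_apply_ne b hpM'.ne)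
  refine ⟨![0, p, p + 1, M], ((strictMono_vecEmpty.vecCons h₂₃).vecCons h₁₂).vecCons h₀₁,
    not_isOriented_of_two_descents_of_two_ascents (i := 1) (j := 3) (i' := 0) (j' := 2)
      ?_ ?_ (by decide) ?_ ?_ (by decide)⟩
  · simpa using hp
  · simpa using h0p.trans_le (hM p)
  · simpa using h0p
  · simpa using hpM'

lemma exists_not_isOriented_comp_of_ascent_ge_max (h0 : ∀ i, b 0 ≤ b i) (hM : ∀ i, b i ≤ b M)
    {q : Fin (t + 1)} (hMq : M ≤ q) (hq : b q < b (q + 1)) :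
    ∃ w : Fin 4 → Fin (t + 1), StrictMono w ∧ ¬ IsOriented (b ∘ w) := by
  have hqM : b q < b M := hq.trans_le (hM _)
  have h0q : b 0 < b (q + 1) := (h0 q).trans_lt hq
  have hq_last : q < Fin.last t := (Fin.le_last q).lt_of_ne fun h => by
    rw [h, Fin.last_add_one] at hq
    exact hq.not_ge (h0 _)
  have h₀₁ : 0 < M := (Fin.zero_le M).lt_of_ne (ne_of_apply_ne b ((h0 q).trans_lt hqM).ne)
  have h₁₂ : M < q := hMq.lt_of_ne (ne_of_apply_ne b hqM.ne')
  have h₂₃ : q < q + 1 := Fin.lt_add_one_iff.2 hq_last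
  refine ⟨![0, M, q, q + 1], ((strictMono_vecEmpty.vecCons h₂₃).vecCons h₁₂).vecCons h₀₁,
    not_isOriented_of_two_descents_of_two_ascents (i := 1) (j := 3) (i' := 0) (j' := 2)
      ?_ ?_ (by decide) ?_ ?_ (by decide)⟩
  · simpa using hqM
  · simpa using h0q
  · simpa using (h0 q).trans_lt hqM
  · simpa using hq

lemma exists_not_isOriented_comp_of_unimodal (h0 : ∀ i, b 0 ≤ b i) (hM : ∀ i, b i ≤ b M)
    (hup : ∀ p < M, b p ≤ b (p + 1)) (hdown : ∀ q, M ≤ q → b (q + 1) ≤ b q)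
    (hb : ¬ IsOriented b) :
    ∃ w : Fin 4 → Fin (t + 1), StrictMono w ∧ ¬ IsOriented (b ∘ w) := by
  rw [IsOriented, not_or, not_le, not_le] at hb
  obtain ⟨hD, hA⟩ := hb
  have mono (i j : Fin (t + 1)) (hij : i ≤ j) (hjM : j ≤ M) : b i ≤ b j := not_lt.1 fun h => by
    obtain ⟨p, hp, -, hpj⟩ := exists_mem_cyclicDescents_of_lt hij h
    exact (mem_cyclicDescents.1 hp).not_ge (hup p (hpj.trans_le hjM))
  have anti (i j : Fin (t + 1)) (hMi : M ≤ i) (hij : i ≤ j) : b j ≤ b i := not_lt.1 fun h => by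
    obtain ⟨p, hp, hip, -⟩ := exists_mem_cyclicDescents_of_lt (a := toDual ∘ b) hij h
    exact (mem_cyclicDescents.1 hp).not_ge (hdown p (hMi.trans hip))
  -- `x` is the later of two ascents (all lie before `M`), `y` the later of two descents
  obtain ⟨s, hs, x, hx, hsx⟩ :
      ∃ s ∈ cyclicDescents (toDual ∘ b), ∃ x ∈ cyclicDescents (toDual ∘ b), s < x :=
    ⟨_, min'_mem _ _, _, max'_mem _ _, min'_lt_max'_of_card _ hA⟩
  obtain ⟨r, hr, y, hy, hry⟩ : ∃ r ∈ cyclicDescents b, ∃ y ∈ cyclicDescents b, r < y :=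
    ⟨_, min'_mem _ _, _, max'_mem _ _, min'_lt_max'_of_card _ hD⟩
  replace hs : b s < b (s + 1) := mem_cyclicDescents.1 hs
  replace hx : b x < b (x + 1) := mem_cyclicDescents.1 hx
  rw [mem_cyclicDescents] at hr hy
  have hxM : x < M := not_le.1 fun h => hx.not_ge (hdown x h)
  have hMr : M ≤ r := not_lt.1 fun h => hr.not_ge (hup r h)
  have h0x : b 0 < b x :=
    ((h0 s).trans_lt hs).trans_le (mono _ _ (Fin.add_one_le_of_lt hsx) hxM.le)
  have hxM' : b x < b M := hx.trans_le (mono _ _ (Fin.add_one_le_of_lt hxM) le_rfl)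
  have hMr1 : M ≤ r + 1 := hMr.trans (Fin.lt_add_one_iff.2 (hry.trans_le (Fin.le_last y))).le
  have hyM : b y < b M :=
    (anti _ _ hMr1 (Fin.add_one_le_of_lt hry)).trans_lt (hr.trans_le (hM r))
  have h0y : b 0 < b y := (h0 _).trans_lt hy
  have h₀₁ : 0 < x := (Fin.zero_le x).lt_of_ne (ne_of_apply_ne b h0x.ne)
  have h₂₃ : M < y := (hMr.trans hry.le).lt_of_ne (ne_of_apply_ne b hyM.ne')
  refine ⟨![0, x, M, y], ((strictMono_vecEmpty.vecCons h₂₃).vecCons hxM).vecCons h₀₁,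
    not_isOriented_of_two_descents_of_two_ascents (i := 2) (j := 3) (i' := 0) (j' := 1)
      ?_ ?_ (by decide) ?_ ?_ (by decide)⟩
  · simpa using hyM
  · simpa using h0y
  · simpa using h0x
  · simpa using hxM'

lemma exists_not_isOriented_comp_of_min_at_zero (h0 : ∀ i, b 0 ≤ b i) (hb : ¬ IsOriented b) :
    ∃ w : Fin 4 → Fin (t + 1), StrictMono w ∧ ¬ IsOriented (b ∘ w) := by
  obtain ⟨M, hM⟩ := Finite.exists_max b
  by_cases hdesc : ∃ p < M, b (p + 1) < b p
  · obtain ⟨p, hpM, hp⟩ := hdesc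
    exact exists_not_isOriented_comp_of_descent_lt_max h0 hM hpM hp
  by_cases hasc : ∃ q, M ≤ q ∧ b q < b (q + 1)
  · obtain ⟨q, hMq, hq⟩ := hasc
    exact exists_not_isOriented_comp_of_ascent_ge_max h0 hM hMq hq
  push Not at hdesc hasc
  exact exists_not_isOriented_comp_of_unimodal h0 hM hdesc hasc hb

end MinAtZero

theorem exists_strictMono_not_isOriented_comp {a : Fin (t + 1) → β} (ha : ¬ IsOriented a) :
    ∃ u : Fin 4 → Fin (t + 1), StrictMono u ∧ ¬ IsOriented (a ∘ u) := by
  obtain ⟨m, hm⟩ := Finite.exists_min a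
  obtain ⟨w, hw, hbw⟩ := exists_not_isOriented_comp_of_min_at_zero (b := fun i => a (i + m))
    (fun i => by simpa using hm (i + m)) (by rwa [isOriented_comp_add_right_iff])
  obtain ⟨c, hc⟩ := exists_strictMono_add_right_comp hw m
  exact ⟨_, hc, (isOriented_comp_add_right_iff (fun i => a (w i + m)) c).not.2 hbw⟩

end CyclicDescents

/-- A full transformation is oriented iff each of its restrictions
to a four-element subset (enumerated increasingly) is oriented. -/
theorem oriented_iff_restrictions_width_four {n : ℕ} (α : Fin n → Fin n) :
    IsOrientedSeq α ↔
      ∀ u : Fin 4 → Fin n, StrictMono u → IsOrientedSeq (α ∘ u) := by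
  cases n with
  | zero => exact iff_of_true (Or.inl (by simp [IsCyclicSeq])) fun u _ => (u 0).elim0
  | succ n =>
    simp only [isOrientedSeq_iff_isOriented]
    refine ⟨fun h u hu => h.comp_strictMono hu, fun H => ?_⟩
    by_contra h
    obtain ⟨u, hu, hαu⟩ := exists_strictMono_not_isOriented_comp h
    exact hαu (H u hu)
end

section
/- Let α be a partial transformation of {1, ..., n} with domain {i1 < i2 < ... < ik}, k ≥ 3, and let ᾱ be the full transformation defined by i ᾱ = i1 α for 1 ≤ i ≤ i2 - 1, i ᾱ = i_ℓ α for i_ℓ ≤ i < i_{ℓ+1} (ℓ = 2, ..., k-1), and i ᾱ = i_k α for i_k ≤ i ≤ n. Then α is orientation-preserving if and only if ᾱ is orientation-preserving. -/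
set_option maxHeartbeats 1000000 in
/-- A partial transformation with domain i₁ < ⋯ < i_k (k ≥ 3), given by its
increasing domain enumeration e and images f, is orientation-preserving iff
the associated full transformation ᾱ is orientation-preserving, where
ᾱ agrees with f 0 below e 1 (in particular below e 0), and equals f ℓ on
[e ℓ, e (ℓ+1)) and f (k-1) above e (k-1). -/
theorem pop_iff_bar_op {n k : ℕ} (hk : 3 ≤ k)
    (e : Fin k → Fin n) (he : StrictMono e) (f : Fin k → Fin n)
    (abar : Fin n → Fin n)
    (hlow : ∀ i : Fin n, i < e ⟨1, by omega⟩ → abar i = f ⟨0, by omega⟩)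
    (hstep : ∀ (i : Fin n) (ℓ : Fin k), e ℓ ≤ i →
      (∀ m : Fin k, e m ≤ i → m ≤ ℓ) → abar i = f ℓ) :
    IsCyclicSeq f ↔ IsCyclicSeq abar := by
  have h0k : 0 < k := by omega
  have hk1 : k - 1 < k := by omega
  have hn : 0 < n := (e ⟨0, h0k⟩).pos
  have hn1 : n - 1 < n := by omega
  obtain ⟨g, hgk, hg_iff⟩ : ∃ g : Fin n → ℕ, (∀ i, g i ≤ k) ∧
      ∀ (i : Fin n) (ℓ : Fin k), e ℓ ≤ i ↔ ℓ.val < g i := by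
    refine ⟨fun i => (Finset.univ.filter fun ℓ : Fin k => e ℓ ≤ i).card, fun i => ?_, ?_⟩
    · calc (Finset.univ.filter fun ℓ : Fin k => e ℓ ≤ i).card
          ≤ Finset.univ.card := Finset.card_filter_le _ _
        _ = k := by simp
    · intro i ℓ
      constructor
      · intro h
        have hsub : Finset.Iic ℓ ⊆ Finset.univ.filter fun m : Fin k => e m ≤ i := by
          intro m hm
          simp only [Finset.mem_Iic] at hm
          simp only [Finset.mem_filter, Finset.mem_univ, true_and]
          exact le_trans (he.monotone hm) h
        have h2 := Finset.card_le_card hsub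
        rwa [Fin.card_Iic] at h2
      · intro h
        by_contra hne
        have hsub : (Finset.univ.filter fun m : Fin k => e m ≤ i) ⊆ Finset.Iio ℓ := by
          intro m hm
          simp only [Finset.mem_filter, Finset.mem_univ, true_and] at hm
          simp only [Finset.mem_Iio]
          by_contra hge
          exact hne (le_trans (he.monotone (not_lt.1 hge)) hm)
        have h2 := Finset.card_le_card hsub
        rw [Fin.card_Iio] at h2
        have h3 : ℓ.val < (Finset.univ.filter fun m : Fin k => e m ≤ i).card := h
        omega
  -- abar in terms of g
  have habar : ∀ i : Fin n, abar i = f ⟨g i - 1, by have := hgk i; omega⟩ := by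
    intro i
    by_cases h0 : 0 < g i
    · apply hstep
      · exact (hg_iff i _).2 (show g i - 1 < g i by omega)
      · intro m hm
        have := (hg_iff i m).1 hm
        show m.val ≤ g i - 1
        omega
    · have h0' : g i = 0 := by omega
      have h1 : ¬ e ⟨0, h0k⟩ ≤ i := by
        intro h
        have h2 : 0 < g i := (hg_iff i ⟨0, h0k⟩).1 h
        omega
      have hi : i < e ⟨1, by omega⟩ :=
        lt_trans (not_le.1 h1) (he (show (0:ℕ) < 1 by omega))
      rw [hlow i hi]
      exact congrArg f (Fin.ext (show (0:ℕ) = g i - 1 by omega))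
  have habar' : ∀ (i : Fin n) (ℓ : Fin k), g i - 1 = ℓ.val → abar i = f ℓ := by
    intro i ℓ h
    rw [habar]
    exact congrArg f (Fin.ext h)
  have hgmono : ∀ i j : Fin n, i ≤ j → g i ≤ g j := by
    intro i j hij
    by_cases h0 : 0 < g i
    · have h2 : (⟨g i - 1, by have := hgk i; omega⟩ : Fin k).val < g j :=
        (hg_iff j _).1 (le_trans ((hg_iff i _).2 (show g i - 1 < g i by omega)) hij)
      have h3 : g i - 1 < g j := h2
      omega
    · omega
  have hge : ∀ ℓ : Fin k, g (e ℓ) = ℓ.val + 1 := by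
    intro ℓ
    have h1 : ℓ.val < g (e ℓ) := (hg_iff _ ℓ).1 le_rfl
    have h2 : ¬ (ℓ.val + 1 < g (e ℓ)) := by
      intro h
      have hlt : ℓ.val + 1 < k := by have := hgk (e ℓ); omega
      have h5 : e ⟨ℓ.val + 1, hlt⟩ ≤ e ℓ := (hg_iff (e ℓ) ⟨ℓ.val + 1, hlt⟩).2 h
      have h3 : e ℓ < e ⟨ℓ.val + 1, hlt⟩ := he (show ℓ.val < ℓ.val + 1 by omega)
      exact absurd h5 (not_le.2 h3)
    omega
  have hglast : g ⟨n - 1, hn1⟩ = k := by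
    have h1 : (⟨k - 1, hk1⟩ : Fin k).val < g ⟨n - 1, hn1⟩ := by
      refine (hg_iff _ _).1 ?_
      have := (e ⟨k - 1, hk1⟩).isLt
      show (e ⟨k - 1, hk1⟩).val ≤ n - 1
      omega
    have h2 : k - 1 < g ⟨n - 1, hn1⟩ := h1
    have := hgk ⟨n - 1, hn1⟩
    omega
  have hgzero : g ⟨0, hn⟩ ≤ 1 := by
    by_contra h
    have h5 : e ⟨1, by omega⟩ ≤ ⟨0, hn⟩ :=
      (hg_iff ⟨0, hn⟩ ⟨1, by omega⟩).2 (show (1:ℕ) < g ⟨0, hn⟩ by omega)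
    have h6 : (e ⟨1, by omega⟩).val ≤ 0 := h5
    have h1 : (e ⟨0, h0k⟩).val < (e ⟨1, by omega⟩).val :=
      he (show (0:ℕ) < 1 by omega)
    omega
  have hgstep : ∀ i : Fin n, ∀ h : i.val + 1 < n, g ⟨i.val + 1, h⟩ ≤ g i + 1 := by
    intro i h
    by_contra hc
    push_neg at hc
    have hik : g i + 1 < k := by have := hgk ⟨i.val + 1, h⟩; omega
    have h1 : (e ⟨g i, by omega⟩).val ≤ i.val + 1 :=
      (hg_iff ⟨i.val + 1, h⟩ ⟨g i, by omega⟩).2 (show g i < g ⟨i.val + 1, h⟩ by omega)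
    have h2 : (e ⟨g i + 1, hik⟩).val ≤ i.val + 1 :=
      (hg_iff ⟨i.val + 1, h⟩ ⟨g i + 1, hik⟩).2 (show g i + 1 < g ⟨i.val + 1, h⟩ by omega)
    have h3 : ¬ (e ⟨g i, by omega⟩).val ≤ i.val := by
      intro hh
      have h6 := (hg_iff i ⟨g i, by omega⟩).1 hh
      have h7 : g i < g i := h6
      omega
    have h4 : (e ⟨g i, by omega⟩).val < (e ⟨g i + 1, hik⟩).val :=
      he (show g i < g i + 1 by omega)
    omega
  have hsucclt : ∀ ℓ : Fin k, ¬ ℓ.val = k - 1 → ℓ.val + 1 < k := by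
    intro ℓ h; have := ℓ.isLt; omega
  have hpred : ∀ (ℓ : Fin k) (hx : ℓ.val + 1 < k), (e ⟨ℓ.val + 1, hx⟩).val - 1 < n := by
    intro ℓ hx; have := (e ⟨ℓ.val + 1, hx⟩).isLt; omega
  -- the descent sets have the same cardinality
  have hcard :
      (Finset.univ.filter fun ℓ : Fin k =>
        f ⟨(ℓ.val + 1) % k, Nat.mod_lt _ ℓ.pos⟩ < f ℓ).card =
      (Finset.univ.filter fun i : Fin n =>
        abar ⟨(i.val + 1) % n, Nat.mod_lt _ i.pos⟩ < abar i).card := by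
    apply Finset.card_bij (fun ℓ _ =>
      if h : ℓ.val = k - 1 then (⟨n - 1, hn1⟩ : Fin n)
      else ⟨(e ⟨ℓ.val + 1, hsucclt ℓ h⟩).val - 1, hpred ℓ (hsucclt ℓ h)⟩)
    · -- membership
      intro ℓ hℓ
      simp only [Finset.mem_filter, Finset.mem_univ, true_and] at hℓ ⊢
      by_cases h : ℓ.val = k - 1
      · rw [dif_pos h]
        have e0 : (⟨((⟨n - 1, hn1⟩ : Fin n).val + 1) % n,
            Nat.mod_lt _ (⟨n - 1, hn1⟩ : Fin n).pos⟩ : Fin n) = ⟨0, hn⟩ := by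
          apply Fin.ext
          show (n - 1 + 1) % n = 0
          rw [Nat.sub_add_cancel (by omega)]
          exact Nat.mod_self n
        rw [e0]
        rw [habar' ⟨0, hn⟩ ⟨0, h0k⟩ (show g ⟨0, hn⟩ - 1 = 0 by have := hgzero; omega)]
        rw [habar' ⟨n - 1, hn1⟩ ⟨k - 1, hk1⟩
          (show g ⟨n - 1, hn1⟩ - 1 = k - 1 by rw [hglast])]
        have e1 : (⟨(ℓ.val + 1) % k, Nat.mod_lt _ ℓ.pos⟩ : Fin k) = ⟨0, h0k⟩ := by
          apply Fin.ext
          show (ℓ.val + 1) % k = 0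
          rw [h, Nat.sub_add_cancel (by omega)]
          exact Nat.mod_self k
        have e2 : ℓ = ⟨k - 1, hk1⟩ := Fin.ext h
        rw [e1, e2] at hℓ
        exact hℓ
      · rw [dif_neg h]
        have hlt : ℓ.val + 1 < k := hsucclt ℓ h
        have hE1 : 1 ≤ (e ⟨ℓ.val + 1, hlt⟩).val := by
          have h9 : (e ⟨0, h0k⟩).val < (e ⟨ℓ.val + 1, hlt⟩).val :=
            he (show (0:ℕ) < ℓ.val + 1 by omega)
          omega
        have hEn : (e ⟨ℓ.val + 1, hlt⟩).val < n := (e ⟨ℓ.val + 1, hlt⟩).isLt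
        have hEn' : (e ⟨ℓ.val + 1, hlt⟩).val - 1 < n := hpred ℓ hlt
        have e0 : (⟨((⟨(e ⟨ℓ.val + 1, hlt⟩).val - 1, hEn'⟩ : Fin n).val + 1) % n,
            Nat.mod_lt _ (⟨(e ⟨ℓ.val + 1, hlt⟩).val - 1, hEn'⟩ : Fin n).pos⟩ : Fin n)
            = e ⟨ℓ.val + 1, hlt⟩ := by
          apply Fin.ext
          show ((e ⟨ℓ.val + 1, hlt⟩).val - 1 + 1) % n = (e ⟨ℓ.val + 1, hlt⟩).val
          rw [Nat.sub_add_cancel hE1]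
          exact Nat.mod_eq_of_lt hEn
        rw [e0]
        have hge1 : g (e ⟨ℓ.val + 1, hlt⟩) = ℓ.val + 1 + 1 := hge ⟨ℓ.val + 1, hlt⟩
        rw [habar' (e ⟨ℓ.val + 1, hlt⟩) ⟨ℓ.val + 1, hlt⟩
          (show g (e ⟨ℓ.val + 1, hlt⟩) - 1 = ℓ.val + 1 by omega)]
        have hgE : g ⟨(e ⟨ℓ.val + 1, hlt⟩).val - 1, hEn'⟩ = ℓ.val + 1 := by
          have hle : ℓ.val < g ⟨(e ⟨ℓ.val + 1, hlt⟩).val - 1, hEn'⟩ := by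
            refine (hg_iff _ ℓ).1 ?_
            show (e ℓ).val ≤ (e ⟨ℓ.val + 1, hlt⟩).val - 1
            have h9 : (e ℓ).val < (e ⟨ℓ.val + 1, hlt⟩).val :=
              he (show ℓ.val < ℓ.val + 1 by omega)
            omega
          have hub : ¬ (ℓ.val + 1 < g ⟨(e ⟨ℓ.val + 1, hlt⟩).val - 1, hEn'⟩) := by
            intro hc
            have h5 : (e ⟨ℓ.val + 1, hlt⟩).val ≤ (e ⟨ℓ.val + 1, hlt⟩).val - 1 :=
              (hg_iff ⟨(e ⟨ℓ.val + 1, hlt⟩).val - 1, hEn'⟩ ⟨ℓ.val + 1, hlt⟩).2 hc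
            omega
          omega
        rw [habar' ⟨(e ⟨ℓ.val + 1, hlt⟩).val - 1, hEn'⟩ ℓ
          (show g ⟨(e ⟨ℓ.val + 1, hlt⟩).val - 1, hEn'⟩ - 1 = ℓ.val by omega)]
        have e1 : (⟨(ℓ.val + 1) % k, Nat.mod_lt _ ℓ.pos⟩ : Fin k) = ⟨ℓ.val + 1, hlt⟩ :=
          Fin.ext (Nat.mod_eq_of_lt hlt)
        rw [e1] at hℓ
        exact hℓ
    · -- injectivity
      intro ℓ1 h1 ℓ2 h2 heq
      by_cases c1 : ℓ1.val = k - 1 <;> by_cases c2 : ℓ2.val = k - 1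
      · exact Fin.ext (c1.trans c2.symm)
      · rw [dif_pos c1, dif_neg c2] at heq
        have hv : n - 1 = (e ⟨ℓ2.val + 1, hsucclt ℓ2 c2⟩).val - 1 :=
          congrArg Fin.val heq
        have hEn := (e ⟨ℓ2.val + 1, hsucclt ℓ2 c2⟩).isLt
        have hE1 : 1 ≤ (e ⟨ℓ2.val + 1, hsucclt ℓ2 c2⟩).val := by
          have h9 : (e ⟨0, h0k⟩).val < (e ⟨ℓ2.val + 1, hsucclt ℓ2 c2⟩).val :=
            he (show (0:ℕ) < ℓ2.val + 1 by omega)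
          omega
        omega
      · rw [dif_neg c1, dif_pos c2] at heq
        have hv : (e ⟨ℓ1.val + 1, hsucclt ℓ1 c1⟩).val - 1 = n - 1 :=
          congrArg Fin.val heq
        have hEn := (e ⟨ℓ1.val + 1, hsucclt ℓ1 c1⟩).isLt
        have hE1 : 1 ≤ (e ⟨ℓ1.val + 1, hsucclt ℓ1 c1⟩).val := by
          have h9 : (e ⟨0, h0k⟩).val < (e ⟨ℓ1.val + 1, hsucclt ℓ1 c1⟩).val :=
            he (show (0:ℕ) < ℓ1.val + 1 by omega)
          omega
        omega
      · rw [dif_neg c1, dif_neg c2] at heq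
        have hv : (e ⟨ℓ1.val + 1, hsucclt ℓ1 c1⟩).val - 1 =
            (e ⟨ℓ2.val + 1, hsucclt ℓ2 c2⟩).val - 1 :=
          congrArg Fin.val heq
        have hE1 : 1 ≤ (e ⟨ℓ1.val + 1, hsucclt ℓ1 c1⟩).val := by
          have h9 : (e ⟨0, h0k⟩).val < (e ⟨ℓ1.val + 1, hsucclt ℓ1 c1⟩).val :=
            he (show (0:ℕ) < ℓ1.val + 1 by omega)
          omega
        have hE2 : 1 ≤ (e ⟨ℓ2.val + 1, hsucclt ℓ2 c2⟩).val := by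
          have h9 : (e ⟨0, h0k⟩).val < (e ⟨ℓ2.val + 1, hsucclt ℓ2 c2⟩).val :=
            he (show (0:ℕ) < ℓ2.val + 1 by omega)
          omega
        have hEv : (e ⟨ℓ1.val + 1, hsucclt ℓ1 c1⟩).val =
            (e ⟨ℓ2.val + 1, hsucclt ℓ2 c2⟩).val := by omega
        have h8 := he.injective (Fin.ext hEv)
        have hv2 : ℓ1.val + 1 = ℓ2.val + 1 := congrArg Fin.val h8
        exact Fin.ext (by omega)
    · -- surjectivity
      intro i hi
      simp only [Finset.mem_filter, Finset.mem_univ, true_and] at hi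
      by_cases hlast : i.val = n - 1
      · refine ⟨⟨k - 1, hk1⟩, Finset.mem_filter.2 ⟨Finset.mem_univ _, ?_⟩, ?_⟩
        · have e0 : (⟨(i.val + 1) % n, Nat.mod_lt _ i.pos⟩ : Fin n) = ⟨0, hn⟩ := by
            apply Fin.ext
            show (i.val + 1) % n = 0
            rw [hlast, Nat.sub_add_cancel (by omega)]
            exact Nat.mod_self n
          have e1 : i = ⟨n - 1, hn1⟩ := Fin.ext hlast
          rw [e0, e1] at hi
          rw [habar' ⟨0, hn⟩ ⟨0, h0k⟩ (show g ⟨0, hn⟩ - 1 = 0 by have := hgzero; omega)] at hi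
          rw [habar' ⟨n - 1, hn1⟩ ⟨k - 1, hk1⟩
            (show g ⟨n - 1, hn1⟩ - 1 = k - 1 by rw [hglast])] at hi
          have e2 : (⟨((⟨k - 1, hk1⟩ : Fin k).val + 1) % k,
              Nat.mod_lt _ (⟨k - 1, hk1⟩ : Fin k).pos⟩ : Fin k) = ⟨0, h0k⟩ := by
            apply Fin.ext
            show (k - 1 + 1) % k = 0
            rw [Nat.sub_add_cancel (by omega)]
            exact Nat.mod_self k
          rw [e2]
          exact hi
        · rw [dif_pos rfl]
          exact Fin.ext hlast.symm
      · have hsucc : i.val + 1 < n := by have := i.isLt; omega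
        have e0 : (⟨(i.val + 1) % n, Nat.mod_lt _ i.pos⟩ : Fin n) = ⟨i.val + 1, hsucc⟩ :=
          Fin.ext (Nat.mod_eq_of_lt hsucc)
        rw [e0] at hi
        have hmono : g i ≤ g ⟨i.val + 1, hsucc⟩ :=
          hgmono i ⟨i.val + 1, hsucc⟩ (show i.val ≤ i.val + 1 by omega)
        have hstep1 : g ⟨i.val + 1, hsucc⟩ ≤ g i + 1 := hgstep i hsucc
        have hgik' : g i - 1 < k := by have := hgk i; omega
        have hne' : g ⟨i.val + 1, hsucc⟩ - 1 ≠ g i - 1 := by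
          intro hc
          rw [habar' ⟨i.val + 1, hsucc⟩ ⟨g i - 1, hgik'⟩ hc] at hi
          rw [habar' i ⟨g i - 1, hgik'⟩ rfl] at hi
          exact lt_irrefl _ hi
        have hgi1 : 1 ≤ g i := by omega
        have hgeq : g ⟨i.val + 1, hsucc⟩ = g i + 1 := by omega
        have hik : g i < k := by have := hgk ⟨i.val + 1, hsucc⟩; omega
        refine ⟨⟨g i - 1, hgik'⟩, Finset.mem_filter.2 ⟨Finset.mem_univ _, ?_⟩, ?_⟩
        · have e2 : (⟨((⟨g i - 1, hgik'⟩ : Fin k).val + 1) % k,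
              Nat.mod_lt _ (⟨g i - 1, hgik'⟩ : Fin k).pos⟩ : Fin k) = ⟨g i, hik⟩ := by
            apply Fin.ext
            show (g i - 1 + 1) % k = g i
            rw [Nat.sub_add_cancel hgi1]
            exact Nat.mod_eq_of_lt hik
          rw [e2]
          rw [habar' ⟨i.val + 1, hsucc⟩ ⟨g i, hik⟩
            (show g ⟨i.val + 1, hsucc⟩ - 1 = g i by omega)] at hi
          rw [habar' i ⟨g i - 1, hgik'⟩ rfl] at hi
          exact hi
        · have hkk : ¬ ((⟨g i - 1, hgik'⟩ : Fin k).val = k - 1) := by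
            show ¬ (g i - 1 = k - 1)
            omega
          rw [dif_neg hkk]
          have hkk' : (⟨g i - 1, hgik'⟩ : Fin k).val + 1 < k := hsucclt ⟨g i - 1, hgik'⟩ hkk
          have hle : (e ⟨g i - 1 + 1, hkk'⟩).val ≤ i.val + 1 :=
            (hg_iff ⟨i.val + 1, hsucc⟩ ⟨g i - 1 + 1, hkk'⟩).2
              (show g i - 1 + 1 < g ⟨i.val + 1, hsucc⟩ by omega)
          have hnle : ¬ (e ⟨g i - 1 + 1, hkk'⟩).val ≤ i.val := by
            intro hc
            have h6 := (hg_iff i ⟨g i - 1 + 1, hkk'⟩).1 hc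
            have h9 : g i - 1 + 1 < g i := h6
            omega
          apply Fin.ext
          show (e ⟨g i - 1 + 1, hkk'⟩).val - 1 = i.val
          omega
  unfold IsCyclicSeq
  rw [hcard]
end

section
/- Let n ≥ 3 and let α be a partial permutation of {1, ..., n} that is a partial isometry of the cycle graph C_n, i.e., d(xα, yα) = d(x, y) for all x, y in the domain of α, where d(x, y) = min{|x - y|, n - |x - y|}. Then α is oriented. -/
/-- The geodesic distance on the cycle graph C_n. -/
def cycleDist (n : ℕ) (x y : Fin n) : ℕ :=
  min (Nat.dist x.val y.val) (n - Nat.dist x.val y.val)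

theorem exists_eq_const_add_or_const_sub_of_isometry {G ι α : Type*} [AddCommGroup G] {N : G → α}
    (hN : ∀ {x y : G}, N x = N y → x = y ∨ x = -y) {e f : ι → G}
    (hiso : ∀ i j, N (f j - f i) = N (e j - e i)) :
    ∃ c, (∀ i, f i = c + e i) ∨ (∀ i, f i = c - e i) := by
  rcases isEmpty_or_nonempty ι with hι | hι
  · exact ⟨0, Or.inl isEmptyElim⟩
  obtain ⟨i₀⟩ := hι
  by_cases hrot : ∀ i, f i - f i₀ = e i - e i₀
  · exact ⟨f i₀ - e i₀, Or.inl fun i => by linear_combination (norm := abel) hrot i⟩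
  by_cases hrefl : ∀ i, f i - f i₀ = -(e i - e i₀)
  · exact ⟨f i₀ + e i₀, Or.inr fun i => by linear_combination (norm := abel) hrefl i⟩
  simp only [not_forall] at hrot hrefl
  obtain ⟨j, hj⟩ := hrot
  obtain ⟨k, hk⟩ := hrefl
  exfalso
  have hk_rot : f k - f i₀ = e k - e i₀ := (hN (hiso i₀ k)).resolve_right hk
  rcases hN (hiso j k) with hjk | hjk
  · exact hj (by linear_combination (norm := abel) hk_rot - hjk)
  · have hj_refl : f j - f i₀ = -(e j - e i₀) := (hN (hiso i₀ j)).resolve_left hj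
    exact hk (by linear_combination (norm := abel) hjk + hj_refl)

theorem cycleDist_eq_cycleDist_zero_sub {n : ℕ} [NeZero n] (x y : Fin n) :
    cycleDist n x y = cycleDist n 0 (y - x) := by
  unfold cycleDist Nat.dist
  rcases le_or_gt x y with h | h
  · rw [Fin.sub_val_of_le h]
    simp only [Fin.val_zero]
    omega
  · rw [Fin.coe_sub_iff_lt.2 h]
    simp only [Fin.val_zero]
    omega

theorem eq_or_eq_neg_of_cycleDist_zero_eq {n : ℕ} [NeZero n] {x y : Fin n}
    (h : cycleDist n 0 x = cycleDist n 0 y) : x = y ∨ x = -y := by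
  unfold cycleDist Nat.dist at h
  simp only [Fin.val_zero] at h
  rw [Fin.ext_iff, Fin.ext_iff, Fin.val_neg]
  have := x.isLt
  have := y.isLt
  split_ifs with hy
  · subst hy; simp only [Fin.val_zero] at h ⊢; omega
  · have := Fin.val_ne_zero_iff.2 hy
    omega

theorem isAntiCyclicSeq_iff_isCyclicSeq_rev {n t : ℕ} (a : Fin t → Fin n) :
    IsAntiCyclicSeq a ↔ IsCyclicSeq (fun i => (a i).rev) := by
  simp only [IsAntiCyclicSeq, IsCyclicSeq, Fin.rev_lt_rev]

theorem Monotone.isCyclicSeq_const_add {n t : ℕ} {e : Fin t → Fin n} (he : Monotone e)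
    (c : Fin n) : IsCyclicSeq (fun i => c + e i) := by
  suffices h : ∀ i j i' j' : Fin t, i < j → i'.val = (i.val + 1) % t → j'.val = (j.val + 1) % t →
      c + e i' < c + e i → c + e j' < c + e j → False by
    rw [IsCyclicSeq, Finset.card_le_one]
    simp only [Finset.mem_filter, Finset.mem_univ, true_and]
    intro i hi j hj
    by_contra hij
    rcases lt_or_gt_of_ne hij with hlt | hlt
    · exact h i j _ _ hlt rfl rfl hi hj
    · exact h j i _ _ hlt rfl rfl hj hi
  intro i j i' j' hij hi' hj' hdesc_i hdesc_j
  rw [Fin.lt_def, Fin.val_add_eq_ite, Fin.val_add_eq_ite] at hdesc_i hdesc_j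
  rw [Fin.lt_def] at hij
  rw [Nat.mod_eq_of_lt (by omega)] at hi'
  have h₁ : (e i).val ≤ (e i').val := he (Fin.le_def.2 (by omega))
  have h₂ : (e i').val ≤ (e j).val := he (Fin.le_def.2 (by omega))
  have := (e j).isLt
  -- for `x ≤ y`, `c + y < c + x` holds exactly when `c + y` wraps around `n` and `c + x` does not
  by_cases hj : j.val + 1 < t
  · rw [Nat.mod_eq_of_lt hj] at hj'
    have h₃ : (e j).val ≤ (e j').val := he (Fin.le_def.2 (by omega))
    split_ifs at hdesc_i hdesc_j <;> omega
  · rw [show j.val + 1 = t by omega, Nat.mod_self] at hj'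
    have h₃ : (e j').val ≤ (e i).val := he (Fin.le_def.2 (by omega))
    split_ifs at hdesc_i hdesc_j <;> omega

theorem Monotone.isAntiCyclicSeq_const_sub {n t : ℕ} {e : Fin t → Fin n} (he : Monotone e)
    (c : Fin n) : IsAntiCyclicSeq (fun i => c - e i) := by
  simpa only [isAntiCyclicSeq_iff_isCyclicSeq_rev, Fin.rev_sub] using he.isCyclicSeq_const_add c.rev

theorem partial_isometry_oriented_general {n t : ℕ}
    (e : Fin t → Fin n) (he : StrictMono e)
    (f : Fin t → Fin n)
    (hiso : ∀ x y : Fin t, cycleDist n (f x) (f y) = cycleDist n (e x) (e y)) :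
    IsOrientedSeq f := by
  rcases Nat.eq_zero_or_pos t with rfl | ht
  · exact Or.inl (by simp [IsCyclicSeq])
  have : NeZero n := NeZero.of_pos (e ⟨0, ht⟩).pos
  obtain ⟨c, hrot | hrefl⟩ := exists_eq_const_add_or_const_sub_of_isometry
    (N := cycleDist n 0) (e := e) (f := f) eq_or_eq_neg_of_cycleDist_zero_eq fun i j => by
      rw [← cycleDist_eq_cycleDist_zero_sub, ← cycleDist_eq_cycleDist_zero_sub, hiso]
  · exact Or.inl (funext hrot ▸ he.monotone.isCyclicSeq_const_add c)
  · exact Or.inr (funext hrefl ▸ he.monotone.isAntiCyclicSeq_const_sub c)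

/-- Every partial isometry of the cycle graph C_n (n ≥ 3), given by its
increasing domain enumeration e and injective images f, is oriented. -/
theorem partial_isometry_oriented {n t : ℕ} (hn : 3 ≤ n)
    (e : Fin t → Fin n) (he : StrictMono e)
    (f : Fin t → Fin n) (hf : Function.Injective f)
    (hiso : ∀ x y : Fin t, cycleDist n (f x) (f y) = cycleDist n (e x) (e y)) :
    IsOrientedSeq f :=
  partial_isometry_oriented_general e he f hiso
end
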